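/- arXiv:1404.5859 — 3 statements merged into one kernel-verified Lean document; each statement's English description precedes it below -/
import Mathlib

section
/- Assume strictly positive prices and that the per-good net utilities v_k({l}, p) = w_l − p_l are pairwise distinct. Then the set A_k consisting of all goods whose per-good net utility is strictly positive, truncated to the q_k goods with the largest per-good net utilities, is a demand set of consumer k, i.e., it maximizes the net utility v_k(B,p) = U_k(B) − ∑_{l∈B} p_l over all B ⊆ L. -/
/-!
Write `f l = w l - p l`. Since the weights are nonnegative, `U A = ∑_{l ∈ A} w l`, and for any
`B` the value `U B` is attained by some `C ⊆ B` with `|C| ≤ q`; as prices are positive,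
`v(B) ≤ ∑_{l ∈ C} f l`. Dropping the goods with `f l ≤ 0` from `C` only increases this sum, and
a set `C` of at most `q` goods with positive `f` has `|C \ A| ≤ |A \ C|`, while every good of
`C \ A` has a smaller `f` than every good of `A \ C`. Exchanging `C \ A` for `A \ C` then gives
`∑_{l ∈ C} f l ≤ ∑_{l ∈ A} f l = v(A)`.
-/

open Finset

variable {L : Type*} [Fintype L] [DecidableEq L]

/-- Hypotheses of the greedy demand construction: prices are strictly positive,
weights nonnegative, per-good net utilities `w l - p l` pairwise distinct, and
`A` consists of the at most `q` goods with the largest strictly positive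
per-good net utilities. -/
structure GreedySetting (w p : L → ℝ) (q : ℕ) (A : Finset L) : Prop where
  hp : ∀ l, 0 < p l
  hw : ∀ l, 0 ≤ w l
  distinct : ∀ l l', l ≠ l' → w l - p l ≠ w l' - p l'
  pos : ∀ l ∈ A, 0 < w l - p l
  card : A.card = min q (Finset.univ.filter (fun l => 0 < w l - p l)).card
  best : ∀ l ∈ A, ∀ l' ∉ A, 0 < w l' - p l' → w l' - p l' < w l - p l

section SumComparison

variable {ι M : Type*} [AddCommMonoid M] [LinearOrder M] [IsOrderedCancelAddMonoid M]
  {f : ι → M} {s t : Finset ι}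

theorem Finset.sum_le_sum_of_card_le_of_forall_le (hst : #s ≤ #t)
    (hle : ∀ x ∈ s, ∀ y ∈ t, f x ≤ f y) (ht : ∀ y ∈ t, 0 ≤ f y) :
    ∑ x ∈ s, f x ≤ ∑ y ∈ t, f y := by
  rcases t.eq_empty_or_nonempty with rfl | htne
  · rw [card_eq_zero.1 (Nat.le_zero.1 hst)]
  set m := t.inf' htne f
  calc ∑ x ∈ s, f x ≤ #s • m := sum_le_card_nsmul _ _ _ fun x hx => le_inf' _ _ (hle x hx)
    _ ≤ #t • m := nsmul_le_nsmul_left (le_inf' _ _ ht) hst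
    _ ≤ ∑ y ∈ t, f y := card_nsmul_le_sum _ _ _ fun y hy => inf'_le _ hy

theorem Finset.sum_le_sum_of_card_le_of_forall_sdiff_le [DecidableEq ι] (hst : #s ≤ #t)
    (hle : ∀ x ∈ s \ t, ∀ y ∈ t \ s, f x ≤ f y) (ht : ∀ y ∈ t \ s, 0 ≤ f y) :
    ∑ x ∈ s, f x ≤ ∑ y ∈ t, f y :=
  sum_sdiff_le_sum_sdiff.1 <|
    sum_le_sum_of_card_le_of_forall_le (card_sdiff_le_card_sdiff_iff.2 hst) hle ht

theorem IsGreatest.eq_sum_of_card_le {w : ι → M} {S : Finset ι} {q : ℕ} {u : M}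
    (hu : IsGreatest {x | ∃ B ⊆ S, #B ≤ q ∧ x = ∑ l ∈ B, w l} u) (hS : #S ≤ q)
    (hw : ∀ l ∈ S, 0 ≤ w l) : u = ∑ l ∈ S, w l :=
  hu.unique ⟨⟨S, Subset.rfl, hS, rfl⟩, by
    rintro _ ⟨B, hBS, -, rfl⟩
    exact sum_le_sum_of_subset_of_nonneg hBS fun l hl _ => hw l hl⟩

end SumComparison

namespace GreedySetting

variable {ι : Type*} [Fintype ι] {w p : ι → ℝ} {q : ℕ} {A : Finset ι}

theorem card_le (hG : GreedySetting w p q A) : #A ≤ q :=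
  hG.card ▸ min_le_left _ _

theorem card_le_card_of_forall_pos (hG : GreedySetting w p q A) {C : Finset ι}
    (hC : ∀ l ∈ C, 0 < w l - p l) (hCq : #C ≤ q) : #C ≤ #A :=
  hG.card ▸ le_min hCq (card_le_card fun l hl => mem_filter.2 ⟨mem_univ l, hC l hl⟩)

theorem sum_le_of_card_le [DecidableEq ι] (hG : GreedySetting w p q A) {C : Finset ι}
    (hCq : #C ≤ q) :
    ∑ l ∈ C, (w l - p l) ≤ ∑ l ∈ A, (w l - p l) := by
  set C' := C.filter fun l => 0 < w l - p l
  have hC' : ∀ l ∈ C', 0 < w l - p l := fun l hl => (mem_filter.1 hl).2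
  calc ∑ l ∈ C, (w l - p l) ≤ ∑ l ∈ C', (w l - p l) :=
        sum_le_sum_of_subset_of_nonpos' (filter_subset _ C) fun l _ hl =>
          not_lt.1 fun hpos => hl (mem_filter.2 ⟨‹_›, hpos⟩)
    _ ≤ ∑ l ∈ A, (w l - p l) := by
      refine sum_le_sum_of_card_le_of_forall_sdiff_le
        (hG.card_le_card_of_forall_pos hC' ((card_le_card (filter_subset _ C)).trans hCq))
        (fun x hx y hy => ?_) fun y hy => (hG.pos y (mem_sdiff.1 hy).1).le
      obtain ⟨hxC', hxA⟩ := mem_sdiff.1 hx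
      exact (hG.best y (mem_sdiff.1 hy).1 x hxA (hC' x hxC')).le

end GreedySetting

/-- The greedy set `A` is a demand set: it maximizes the net utility
`v(B,p) = U(B) - ∑_{l∈B} p l`, where `U` is the `q`-satiation of the
additively separable valuation with weights `w`. -/
theorem greedy_is_demand (w p : L → ℝ) (q : ℕ) (A : Finset L)
    (hG : GreedySetting w p q A) (U : Finset L → ℝ)
    (hU : ∀ A' : Finset L,
      IsGreatest {x | ∃ B ⊆ A', B.card ≤ q ∧ x = ∑ l ∈ B, w l} (U A')) :
    ∀ B : Finset L, U B - ∑ l ∈ B, p l ≤ U A - ∑ l ∈ A, p l := by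
  intro B
  obtain ⟨C, hCB, hCq, hUB⟩ := (hU B).1
  have hUA : U A = ∑ l ∈ A, w l :=
    (hU A).eq_sum_of_card_le hG.card_le fun l _ => hG.hw l
  have hpC : ∑ l ∈ C, p l ≤ ∑ l ∈ B, p l :=
    sum_le_sum_of_subset_of_nonneg hCB fun l _ _ => (hG.hp l).le
  have hCA := hG.sum_le_of_card_le hCq
  rw [sum_sub_distrib, sum_sub_distrib] at hCA
  rw [hUB, hUA]
  linarith
end

section
/- The set Z of goods demanded by at least two consumers maximizes the function B ↦ ∑_k |A_k ∩ B| − |B| over all subsets B ⊆ L, and Z is the smallest (with respect to inclusion) maximizer. -/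
/-- The excess demand set `Z` (goods demanded by at least two consumers)
maximizes `f(B) = ∑_k |A_k ∩ B| - |B|` over all `B ⊆ L`, and it is the
smallest maximizer with respect to inclusion. -/
theorem excess_demand_maximizes {L : Type*} [Fintype L] [DecidableEq L] {K : ℕ}
    (A : Fin K → Finset L) (Z : Finset L)
    (hZ : ∀ l : L, l ∈ Z ↔ ∃ k j : Fin K, k ≠ j ∧ l ∈ A k ∧ l ∈ A j) :
    ∀ B : Finset L,
      ((∑ k, ((A k ∩ B).card : ℤ)) - (B.card : ℤ)
        ≤ (∑ k, ((A k ∩ Z).card : ℤ)) - (Z.card : ℤ)) ∧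
      ((∑ k, ((A k ∩ B).card : ℤ)) - (B.card : ℤ)
        = (∑ k, ((A k ∩ Z).card : ℤ)) - (Z.card : ℤ) → Z ⊆ B) := by
  classical
  set h : L → ℤ := fun l =>
    ((Finset.univ.filter (fun k : Fin K => l ∈ A k)).card : ℤ) - 1 with hh
  -- f(B) = ∑_{l ∈ B} h l
  have key : ∀ B : Finset L,
      (∑ k, ((A k ∩ B).card : ℤ)) - (B.card : ℤ) = ∑ l ∈ B, h l := by
    intro B
    have h1 : ∀ k : Fin K, ((A k ∩ B).card : ℤ)
        = ∑ l ∈ B, (if l ∈ A k then (1 : ℤ) else 0) := by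
      intro k
      rw [Finset.sum_boole, Finset.filter_mem_eq_inter, Finset.inter_comm]
    calc (∑ k, ((A k ∩ B).card : ℤ)) - (B.card : ℤ)
        = (∑ k, ∑ l ∈ B, (if l ∈ A k then (1 : ℤ) else 0)) - ∑ l ∈ B, 1 := by
          simp [h1]
      _ = ∑ l ∈ B, ((∑ k : Fin K, (if l ∈ A k then (1 : ℤ) else 0)) - 1) := by
          rw [Finset.sum_comm, ← Finset.sum_sub_distrib]
      _ = ∑ l ∈ B, h l := by
          refine Finset.sum_congr rfl fun l _ => ?_
          simp [hh, Finset.sum_boole]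
  -- h ≥ 1 on Z, h ≤ 0 off Z
  have hpos : ∀ l ∈ Z, 1 ≤ h l := by
    intro l hl
    obtain ⟨k, j, hkj, hk, hj⟩ := (hZ l).1 hl
    have : 1 < (Finset.univ.filter (fun k : Fin K => l ∈ A k)).card := by
      apply Finset.one_lt_card.2
      exact ⟨k, by simp [hk], j, by simp [hj], hkj⟩
    simp only [hh]
    omega
  have hneg : ∀ l, l ∉ Z → h l ≤ 0 := by
    intro l hl
    have : (Finset.univ.filter (fun k : Fin K => l ∈ A k)).card ≤ 1 := by
      by_contra hc
      push_neg at hc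
      obtain ⟨k, hk, j, hj, hkj⟩ := Finset.one_lt_card.1 hc
      exact hl ((hZ l).2 ⟨k, j, hkj, by simpa using hk, by simpa using hj⟩)
    simp only [hh]
    omega
  intro B
  have hBZ : ∑ l ∈ B, h l = ∑ l ∈ B ∩ Z, h l + ∑ l ∈ B \ Z, h l :=
    (Finset.sum_inter_add_sum_sdiff B Z h).symm
  have h2 : ∑ l ∈ B \ Z, h l ≤ 0 :=
    Finset.sum_nonpos fun l hl => hneg l (Finset.mem_sdiff.1 hl).2
  have h3 : ∑ l ∈ B ∩ Z, h l ≤ ∑ l ∈ Z, h l := by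
    apply Finset.sum_le_sum_of_subset_of_nonneg (Finset.inter_subset_right)
    intro l hl _
    linarith [hpos l hl]
  constructor
  · rw [key B, key Z]
    linarith
  · intro heq
    rw [key B, key Z] at heq
    intro l0 hl0
    by_contra hnot
    have hsub : B ∩ Z ⊆ Z.erase l0 := by
      intro x hx
      rcases Finset.mem_inter.1 hx with ⟨hxB, hxZ⟩
      exact Finset.mem_erase.2 ⟨fun hxl => hnot (hxl ▸ hxB), hxZ⟩
    have h4 : ∑ l ∈ B ∩ Z, h l ≤ ∑ l ∈ Z.erase l0, h l := by
      apply Finset.sum_le_sum_of_subset_of_nonneg hsub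
      intro l hl _
      linarith [hpos l (Finset.mem_of_mem_erase hl)]
    have h5 : ∑ l ∈ Z.erase l0, h l = ∑ l ∈ Z, h l - h l0 := by
      rw [← Finset.add_sum_erase Z h hl0]; ring
    have := hpos l0 hl0
    linarith
end

section
/- In a competitive market with indivisible goods where each consumer's utility is the q_k-satiation of a nonnegative additively separable valuation, a Walrasian equilibrium exists. -/
/-!
Split consumer `k` into `q k` unit-demand clones valuing good `l` at `w k l`. In a Walrasian
equilibrium of this assignment market, the goods bought by the clones of `k` all yield the same net
utility `u = max (0, maxₗ (w k l - p l))`, and there are `q k` of them unless `u = 0`; so they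
maximize `∑ (w k l - p l)` over bundles of at most `q k` goods, hence also the satiated net utility.

For the assignment market, minimize over `p ≥ 0` the convex function
`∑ₗ pₗ + ∑ᵢ max (0, maxₗ (vᵢₗ - pₗ))`, the dual objective of the assignment LP. At a minimizer,
lowering the prices of a set `T` of positively priced goods, or raising the prices of the goods
demanded by a set `S` of agents with positive surplus, does not decrease it; computing the
one-sided derivatives turns this into Hall's condition for matching `T` to distinct buyers and `S`
to distinct demanded goods. The Mendelsohn–Dulmage argument merges the two matchings into one that
serves every agent with positive surplus and sells every good with positive price.
-/

open Finset Filter Topology Function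

section Matching

variable {α β : Type*}

abbrev IsMatching (m : α → Option β) : Prop :=
  ∀ a a', ∀ b ∈ m a, b ∈ m a' → a = a'

theorem IsMatching.update [DecidableEq α] {m : α → Option β} (hm : IsMatching m) (a : α) {b : β}
    (hb : ∀ a', m a' ≠ some b) : IsMatching (Function.update m a (some b)) := by
  intro a₁ a₂ b' h₁ h₂
  simp only [update_apply, Option.mem_def] at h₁ h₂
  split_ifs at h₁ h₂ with e₁ e₂ e₂
  · exact e₁.trans e₂.symm
  · cases h₁; exact absurd h₂ (hb a₂)
  · cases h₂; exact absurd h₁ (hb a₁)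
  · exact hm a₁ a₂ b' h₁ h₂

variable {r : α → β → Prop}

/-- Reassigning `g b₀` to a `b₀ ∈ B` left uncovered keeps every matched `a` matched and strictly
enlarges the set of `b ∈ B` matched to `g b`. -/
theorem IsMatching.exists_cover {B : Set β} [Fintype B] (g : B → α)
    (hg : Injective g) (hgr : ∀ b, r (g b) b) {m : α → Option β} (hm : IsMatching m)
    (hmr : ∀ a, ∀ b ∈ m a, r a b) :
    ∃ m', IsMatching m' ∧ (∀ a, ∀ b ∈ m' a, r a b) ∧ (∀ a, m a ≠ none → m' a ≠ none) ∧
      ∀ b ∈ B, ∃ a, m' a = some b := by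
  classical
  induction hn : #{b : B | m (g b) ≠ some ↑b} using Nat.strong_induction_on generalizing m with
  | _ n ih =>
    by_cases hcov : ∀ b ∈ B, ∃ a, m a = some b
    · exact ⟨m, hm, hmr, fun _ => id, hcov⟩
    push Not at hcov
    obtain ⟨b₀, hb₀, hfree⟩ := hcov
    set m₂ := Function.update m (g ⟨b₀, hb₀⟩) (some b₀)
    have hm₂r : ∀ a, ∀ b ∈ m₂ a, r a b := by
      intro a b h
      simp only [m₂, update_apply, Option.mem_def] at h
      split_ifs at h with ha
      · cases h; exact ha ▸ hgr _
      · exact hmr a b h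
    have hlt : #{b : B | m₂ (g b) ≠ some ↑b} < n := by
      rw [← hn]
      refine card_lt_card ⟨fun b hb => ?_, fun hsub => ?_⟩
      · simp only [mem_filter, mem_univ, true_and, m₂, update_apply] at hb ⊢
        split_ifs at hb with h
        · exact absurd (congrArg (some ∘ Subtype.val) (hg h).symm) hb
        · exact hb
      · have := @hsub ⟨b₀, hb₀⟩ (by simpa using hfree _)
        simp [m₂] at this
    obtain ⟨m', hm', hm'r, hext, hcov⟩ := ih _ hlt (hm.update _ hfree) hm₂r rfl
    refine ⟨m', hm', hm'r, fun a ha => hext a ?_, hcov⟩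
    simp only [update_apply]
    split_ifs <;> simp [ha]

theorem exists_matching_of_injective {A : Set α} {B : Set β} [Fintype B]
    (f : A → β) (hf : Injective f) (hfr : ∀ a : A, r a (f a))
    (g : B → α) (hg : Injective g) (hgr : ∀ b, r (g b) b) :
    ∃ m, IsMatching m ∧ (∀ a, ∀ b ∈ m a, r a b) ∧ (∀ a ∈ A, m a ≠ none) ∧
      ∀ b ∈ B, ∃ a, m a = some b := by
  classical
  let m₀ : α → Option β := fun a => if h : a ∈ A then some (f ⟨a, h⟩) else none
  have hm₀ : IsMatching m₀ := by
    intro a a' b h h'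
    simp only [m₀, Option.mem_def] at h h'
    split_ifs at h h' with ha ha'
    exact congrArg Subtype.val (hf (Option.some.inj (h.trans h'.symm)))
  have hm₀r : ∀ a, ∀ b ∈ m₀ a, r a b := by
    intro a b h
    simp only [m₀, Option.mem_def] at h
    split_ifs at h with ha
    cases h
    exact hfr ⟨a, ha⟩
  obtain ⟨m, hm, hmr, hext, hB⟩ := hm₀.exists_cover g hg hgr hm₀r
  exact ⟨m, hm, hmr, fun a ha => hext a (by simp [m₀, ha]), hB⟩

end Matching

theorem eventually_sup'_add_mul_le {ι : Type*} {s : Finset ι} (hs : s.Nonempty) (c d : ι → ℝ)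
    {b : ℝ} (hb : ∀ i ∈ s, c i = s.sup' hs c → d i ≤ b) :
    ∀ᶠ t in 𝓝[>] 0, s.sup' hs (fun i => c i + t * d i) ≤ s.sup' hs c + t * b := by
  have key : ∀ i ∈ s, ∀ᶠ t in 𝓝[>] (0 : ℝ), c i + t * d i ≤ s.sup' hs c + t * b := by
    intro i hi
    rcases (le_sup' c hi).eq_or_lt with h | h
    · filter_upwards [self_mem_nhdsWithin] with t (ht : 0 < t)
      nlinarith [hb i hi h]
    · have hlim : Tendsto (fun t => c i + t * (d i - b)) (𝓝 0) (𝓝 (c i)) :=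
        (by fun_prop : Continuous fun t : ℝ => c i + t * (d i - b)).tendsto' 0 (c i) (by simp)
      filter_upwards [nhdsWithin_le_nhds (hlim.eventually (gt_mem_nhds h))] with t ht
      linarith [show t * (d i - b) = t * d i - t * b by ring]
  filter_upwards [(eventually_all_finset s).2 key] with t ht
  exact sup'_le _ _ ht

namespace UnitDemand

variable {I L : Type*} (v : I → L → ℝ)

/-- `none` is the option of buying nothing. -/
def payoff (p : L → ℝ) (i : I) (o : Option L) : ℝ :=
  o.elim 0 fun l => v i l - p l

theorem payoff_add_smul (p d : L → ℝ) (t : ℝ) (i : I) (o : Option L) :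
    payoff v (p + t • d) i o = payoff v p i o + t * -o.elim 0 d := by
  cases o <;> simp [payoff]; ring

variable [Fintype L]

def indirectUtility (p : L → ℝ) (i : I) : ℝ :=
  univ.sup' univ_nonempty (payoff v p i)

def demand (p : L → ℝ) (i : I) : Set (Option L) :=
  {o | payoff v p i o = indirectUtility v p i}

variable {v}

theorem payoff_le_indirectUtility (p : L → ℝ) (i : I) (o : Option L) :
    payoff v p i o ≤ indirectUtility v p i :=
  le_sup' _ (mem_univ o)

theorem indirectUtility_nonneg (p : L → ℝ) (i : I) : 0 ≤ indirectUtility v p i :=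
  payoff_le_indirectUtility p i none

theorem payoff_le_payoff_of_mem_demand {p : L → ℝ} {i : I} {o' : Option L}
    (h : o' ∈ demand v p i) (o : Option L) : payoff v p i o ≤ payoff v p i o' :=
  (payoff_le_indirectUtility p i o).trans_eq h.symm

variable [Fintype I] (v)

def lyapunov (p : L → ℝ) : ℝ :=
  ∑ l, p l + ∑ i, indirectUtility v p i

theorem continuous_lyapunov : Continuous (lyapunov v) := by
  have hpayoff : ∀ i o, Continuous fun p : L → ℝ => payoff v p i o := by
    rintro i (_ | l) <;> simp only [payoff, Option.elim] <;> fun_prop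
  exact (continuous_finsetSum _ fun l _ => continuous_apply l).add
    (continuous_finsetSum _ fun i _ => Continuous.finset_sup'_apply _ fun o _ => hpayoff i o)

theorem exists_isMinOn_lyapunov : ∃ p ∈ Set.Ici 0, IsMinOn (lyapunov v) (Set.Ici 0) p := by
  refine (continuous_lyapunov v).continuousOn.exists_isMinOn' isClosed_Ici (le_refl (0 : L → ℝ)) ?_
  filter_upwards [(tendsto_norm_cocompact_atTop.eventually_ge_atTop (lyapunov v 0)).filter_mono
    inf_le_left, mem_inf_of_right (mem_principal_self _)] with p hp (hp₀ : 0 ≤ p)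
  have hsum : ∀ l, ‖p l‖ ≤ ∑ l, p l := fun l => by
    rw [Real.norm_of_nonneg (hp₀ l)]
    exact single_le_sum (fun l _ => hp₀ l) (mem_univ l)
  calc lyapunov v 0 ≤ ‖p‖ := hp
    _ ≤ ∑ l, p l := (pi_norm_le_iff_of_nonneg (sum_nonneg fun l _ => hp₀ l)).2 hsum
    _ ≤ lyapunov v p :=
      le_add_of_nonneg_right (sum_nonneg fun i _ => indirectUtility_nonneg p i)

theorem eventually_lyapunov_add_smul_le (p d : L → ℝ) (β : I → ℝ)
    (hβ : ∀ i, ∀ o ∈ demand v p i, -o.elim 0 d ≤ β i) :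
    ∀ᶠ t in 𝓝[>] 0, lyapunov v (p + t • d) ≤ lyapunov v p + t * (∑ l, d l + ∑ i, β i) := by
  have hi : ∀ i, ∀ᶠ t in 𝓝[>] (0 : ℝ),
      indirectUtility v (p + t • d) i ≤ indirectUtility v p i + t * β i := fun i => by
    simp only [indirectUtility, payoff_add_smul]
    exact eventually_sup'_add_mul_le _ _ _ fun o _ ho => hβ i o ho
  filter_upwards [eventually_all.2 hi] with t ht
  have := sum_le_sum fun i (_ : i ∈ univ) => ht i
  simp only [lyapunov, Pi.add_apply, Pi.smul_apply, smul_eq_mul, sum_add_distrib, ← mul_sum]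
    at this ⊢
  linarith

theorem sum_add_sum_nonneg_of_isMinOn {p : L → ℝ} (hp : IsMinOn (lyapunov v) (Set.Ici 0) p)
    {d : L → ℝ} (hd : ∀ᶠ t : ℝ in 𝓝[>] 0, 0 ≤ p + t • d) (β : I → ℝ)
    (hβ : ∀ i, ∀ o ∈ demand v p i, -o.elim 0 d ≤ β i) : 0 ≤ ∑ l, d l + ∑ i, β i := by
  obtain ⟨t, hle, hfeas, ht⟩ :=
    ((eventually_lyapunov_add_smul_le v p d β hβ).and (hd.and self_mem_nhdsWithin)).exists
  have : lyapunov v p ≤ lyapunov v (p + t • d) := hp hfeas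
  exact (mul_nonneg_iff_of_pos_left (show (0 : ℝ) < t from ht)).1 (by linarith)

open Classical in
theorem card_le_card_buyers {p : L → ℝ} (hp₀ : 0 ≤ p) (hp : IsMinOn (lyapunov v) (Set.Ici 0) p)
    (T : Finset L) (hT : ∀ l ∈ T, 0 < p l) : #T ≤ #{i | ∃ l ∈ T, some l ∈ demand v p i} := by
  have hfeas : ∀ l, ∀ᶠ t in 𝓝 (0 : ℝ), 0 ≤ p l + t * if l ∈ T then -1 else 0 := fun l => by
    split_ifs with hl
    · filter_upwards [eventually_lt_nhds (hT l hl)] with t ht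
      linarith
    · simpa using hp₀ l
  have := sum_add_sum_nonneg_of_isMinOn v hp (d := fun l => if l ∈ T then -1 else 0)
    (nhdsWithin_le_nhds ((eventually_all.2 hfeas).mono fun t ht l => by simpa using ht l))
    (fun i => if ∃ l ∈ T, some l ∈ demand v p i then 1 else 0) ?_
  · have hT : ∑ l, (if l ∈ T then -1 else 0 : ℝ) = -#T := by simp
    have hB : ∑ i, (if ∃ l ∈ T, some l ∈ demand v p i then 1 else 0 : ℝ) =
        #{i | ∃ l ∈ T, some l ∈ demand v p i} := by simp
    exact_mod_cast (by linarith : (#T : ℝ) ≤ #{i | ∃ l ∈ T, some l ∈ demand v p i})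
  · rintro i (_ | l) ho
    · simp only [Option.elim]; split_ifs <;> norm_num
    · by_cases hl : l ∈ T
      · simp [hl, show ∃ l ∈ T, some l ∈ demand v p i from ⟨l, hl, ho⟩]
      · simp only [Option.elim, hl, if_false, neg_zero]; split_ifs <;> norm_num

open Classical in
theorem card_le_card_demanded {p : L → ℝ} (hp₀ : 0 ≤ p)
    (hp : IsMinOn (lyapunov v) (Set.Ici 0) p) (S : Finset I)
    (hS : ∀ i ∈ S, 0 < indirectUtility v p i) : #S ≤ #{l | ∃ i ∈ S, some l ∈ demand v p i} := by
  set N : Finset L := {l | ∃ i ∈ S, some l ∈ demand v p i}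
  have hfeas : ∀ᶠ t : ℝ in 𝓝[>] 0, 0 ≤ p + t • fun l => if l ∈ N then 1 else 0 := by
    filter_upwards [self_mem_nhdsWithin] with t (ht : 0 < t) l
    exact add_nonneg (hp₀ l) (mul_nonneg ht.le (by positivity))
  have := sum_add_sum_nonneg_of_isMinOn v hp hfeas (fun i => if i ∈ S then -1 else 0) ?_
  · have hN : ∑ l, (if l ∈ N then 1 else 0 : ℝ) = #N := by simp
    have hS : ∑ i, (if i ∈ S then -1 else 0 : ℝ) = -#S := by simp
    exact_mod_cast (by linarith : (#S : ℝ) ≤ #N)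
  · rintro i (_ | l) ho
    · have hi : i ∉ S := fun hi => (hS i hi).ne' ho.symm
      simp [hi]
    · by_cases hi : i ∈ S
      · simp [hi, N, show ∃ i ∈ S, some l ∈ demand v p i from ⟨i, hi, ho⟩]
      · simp only [Option.elim, hi, if_false]; split_ifs <;> norm_num

theorem exists_equilibrium :
    ∃ (p : L → ℝ) (m : I → Option L), 0 ≤ p ∧ IsMatching m ∧ (∀ i, m i ∈ demand v p i) ∧
      ∀ l, (∀ i, m i ≠ some l) → p l = 0 := by
  classical
  obtain ⟨p, hp₀, hp⟩ := exists_isMinOn_lyapunov v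
  obtain ⟨f, hf, hfr⟩ := (Fintype.all_card_le_filter_rel_iff_exists_injective
    (fun (i : {i | 0 < indirectUtility v p i}) l => some l ∈ demand v p i)).1 fun S => by
      simpa using card_le_card_demanded v hp₀ hp (S.map (Embedding.subtype _)) (by simp +contextual)
  obtain ⟨g, hg, hgr⟩ := (Fintype.all_card_le_filter_rel_iff_exists_injective
    (fun (l : {l | 0 < p l}) i => some l.1 ∈ demand v p i)).1 fun T => by
      simpa using card_le_card_buyers v hp₀ hp (T.map (Embedding.subtype _)) (by simp +contextual)
  obtain ⟨m, hm, hmr, hA, hB⟩ :=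
    exists_matching_of_injective (r := fun i l => some l ∈ demand v p i) f hf hfr g hg hgr
  refine ⟨p, m, hp₀, hm, fun i => ?_, fun l hl => ?_⟩
  · cases hi : m i with
    | some l => exact hmr i l hi
    | none =>
      exact le_antisymm (not_lt.1 fun h => hA i h hi) (indirectUtility_nonneg p i) |>.symm
  · by_contra h
    obtain ⟨i, hi⟩ := hB l ((hp₀ l).lt_of_ne' h)
    exact hl i hi

end UnitDemand

section Satiation

variable {J L : Type*} [Fintype J] {m : J → Option L}

theorem IsMatching.card_filterMap_le [DecidableEq L] (hm : IsMatching m) :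
    #(univ.filterMap m hm) ≤ Fintype.card J := by
  calc #(univ.filterMap m hm) = #((univ.filterMap m hm).image some) :=
        (card_image_of_injective _ (Option.some_injective L)).symm
    _ ≤ #(univ.image m) := card_le_card fun o ho => by
        obtain ⟨l, hl, rfl⟩ := mem_image.1 ho
        simpa [eq_comm] using hl
    _ ≤ Fintype.card J := card_image_le

theorem IsMatching.card_le_card_filterMap (hm : IsMatching m) (h : ∀ j, m j ≠ none) :
    Fintype.card J ≤ #(univ.filterMap m hm) := by
  choose F hF using fun j => Option.ne_none_iff_exists'.1 (h j)
  simpa using card_le_card_of_injOn F (s := univ) (fun j _ => by simpa using ⟨j, hF j⟩)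
    fun j _ j' _ e => hm j j' _ (hF j) (e ▸ hF j')

theorem IsMatching.sum_le_sum_filterMap (hm : IsMatching m) {c : L → ℝ}
    (hmax : ∀ j (o : Option L), o.elim 0 c ≤ (m j).elim 0 c) {B : Finset L}
    (hB : #B ≤ Fintype.card J) : ∑ l ∈ B, c l ≤ ∑ l ∈ univ.filterMap m hm, c l := by
  rcases isEmpty_or_nonempty J with hJ | ⟨⟨j₀⟩⟩
  · rw [Fintype.card_eq_zero, Nat.le_zero, card_eq_zero] at hB
    simp [hB]
  set u := (m j₀).elim 0 c
  have hmu : ∀ j, (m j).elim 0 c = u := fun j => le_antisymm (hmax j₀ _) (hmax j _)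
  have hX : ∀ l ∈ univ.filterMap m hm, c l = u := by
    simp only [mem_filterMap, mem_univ, true_and]
    rintro l ⟨j, hj⟩
    simpa [hj] using hmu j
  have hcard : #B ≤ #(univ.filterMap m hm) ∨ u = 0 := by
    by_cases h : ∀ j, m j ≠ none
    · exact .inl (hB.trans (hm.card_le_card_filterMap h))
    · push Not at h
      obtain ⟨j, hj⟩ := h
      exact .inr (by simpa [hj] using (hmu j).symm)
  calc ∑ l ∈ B, c l ≤ #B • u := sum_le_card_nsmul B c u fun l _ => hmax j₀ (some l)
    _ ≤ #(univ.filterMap m hm) • u := by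
      rcases hcard with h | h
      · exact nsmul_le_nsmul_left (hmax j₀ none) h
      · simp [h]
    _ = ∑ l ∈ univ.filterMap m hm, c l := by rw [sum_congr rfl hX, sum_const]

end Satiation

theorem sub_sum_le_sub_sum_of_forall_card_le {L : Type*} {w p : L → ℝ} (hp : 0 ≤ p) {q : ℕ}
    {U : Finset L → ℝ} (hU : ∀ A, IsGreatest {x | ∃ B ⊆ A, #B ≤ q ∧ x = ∑ l ∈ B, w l} (U A))
    {X : Finset L} (hXq : #X ≤ q)
    (hX : ∀ B : Finset L, #B ≤ q → ∑ l ∈ B, (w l - p l) ≤ ∑ l ∈ X, (w l - p l))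
    (A : Finset L) : U A - ∑ l ∈ A, p l ≤ U X - ∑ l ∈ X, p l := by
  obtain ⟨B, hBA, hBq, hUA⟩ := (hU A).1
  calc U A - ∑ l ∈ A, p l ≤ ∑ l ∈ B, w l - ∑ l ∈ B, p l := by
        rw [hUA]
        gcongr
        exact fun l _ _ => hp l
    _ ≤ ∑ l ∈ X, w l - ∑ l ∈ X, p l := by simpa only [sum_sub_distrib] using hX B hBq
    _ ≤ U X - ∑ l ∈ X, p l := by
        gcongr
        exact (hU X).2 ⟨X, subset_rfl, hXq, rfl⟩

theorem walrasian_equilibrium_exists_general {L : Type*} [Fintype L] [DecidableEq L] {K : ℕ}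
    (w : Fin K → L → ℝ) (q : Fin K → ℕ)
    (U : Fin K → Finset L → ℝ)
    (hU : ∀ k (A : Finset L),
      IsGreatest {x | ∃ B ⊆ A, B.card ≤ q k ∧ x = ∑ l ∈ B, w k l} (U k A)) :
    ∃ (p : L → ℝ) (X : Fin K → Finset L) (X0 : Finset L),
      (∀ l, 0 ≤ p l) ∧
      (∀ k, Disjoint X0 (X k)) ∧
      (∀ k j, k ≠ j → Disjoint (X k) (X j)) ∧
      (X0 ∪ Finset.univ.biUnion X = Finset.univ) ∧
      (∀ k (A : Finset L), U k A - ∑ l ∈ A, p l ≤ U k (X k) - ∑ l ∈ X k, p l) ∧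
      (∀ l ∈ X0, p l = 0) := by
  obtain ⟨p, m, hp, hm, hdem, hfree⟩ :=
    UnitDemand.exists_equilibrium fun i : (k : Fin K) × Fin (q k) => w i.1
  have hmk : ∀ k, IsMatching fun j : Fin (q k) => m ⟨k, j⟩ :=
    fun k j j' l h h' => eq_of_heq (Sigma.mk.inj (hm _ _ l h h')).2
  set X : Fin K → Finset L := fun k => univ.filterMap _ (hmk k)
  refine ⟨p, X, univ \ univ.biUnion X, hp,
    fun k => disjoint_sdiff_self_left.mono_right (subset_biUnion_of_mem X (mem_univ k)),
    fun k k' hkk' => ?_, sdiff_union_of_subset (subset_univ _), fun k => ?_,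
    fun l hl => hfree l ?_⟩
  · rw [disjoint_left]
    simp only [X, mem_filterMap, mem_univ, true_and]
    rintro l ⟨j, hj⟩ ⟨j', hj'⟩
    exact hkk' (congrArg Sigma.fst (hm _ _ l hj hj'))
  · have hcard : #(X k) ≤ q k := by simpa using (hmk k).card_filterMap_le
    refine sub_sum_le_sub_sum_of_forall_card_le hp (hU k) hcard fun B hB => ?_
    exact (hmk k).sum_le_sum_filterMap (c := fun l => w k l - p l)
      (fun j o => UnitDemand.payoff_le_payoff_of_mem_demand (hdem ⟨k, j⟩) o) (by simpa using hB)
  · rintro ⟨k, j⟩ h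
    exact (mem_sdiff.1 hl).2 (mem_biUnion.2 ⟨k, mem_univ k, (mem_filterMap _).2 ⟨j, mem_univ j, h⟩⟩)

/-- Existence of a Walrasian equilibrium in a competitive market with
indivisible goods where each consumer's utility is the `q k`-satiation of a
nonnegative additively separable valuation: there are nonnegative prices `p`
and a partition `(X₀, X₁, …, X_K)` of the goods such that each consumer's
bundle maximizes his net utility, and every good in `X₀` has price zero. -/
theorem walrasian_equilibrium_exists {L : Type*} [Fintype L] [DecidableEq L] {K : ℕ}
    (w : Fin K → L → ℝ) (hw : ∀ k l, 0 ≤ w k l) (q : Fin K → ℕ)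
    (U : Fin K → Finset L → ℝ)
    (hU : ∀ k (A : Finset L),
      IsGreatest {x | ∃ B ⊆ A, B.card ≤ q k ∧ x = ∑ l ∈ B, w k l} (U k A)) :
    ∃ (p : L → ℝ) (X : Fin K → Finset L) (X0 : Finset L),
      (∀ l, 0 ≤ p l) ∧
      (∀ k, Disjoint X0 (X k)) ∧
      (∀ k j, k ≠ j → Disjoint (X k) (X j)) ∧
      (X0 ∪ Finset.univ.biUnion X = Finset.univ) ∧
      (∀ k (A : Finset L), U k A - ∑ l ∈ A, p l ≤ U k (X k) - ∑ l ∈ X k, p l) ∧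
      (∀ l ∈ X0, p l = 0) :=
  walrasian_equilibrium_exists_general w q U hU
end
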